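/- There exists an integer L₀ (depending only on β) such that the following holds: if (p,q,r,s) is a bad quadruple with p, r ∈ P_K and q, s ∈ P_L, where K ≥ L, then |φ_p + φ_q − φ_r − φ_s| < 4·2^{−L²}; and if moreover L ≥ L₀, then (K−1)² + (L−1)² > β·(L−1)². -/

import Mathlib

/-- `m_p := ⌊2^{K_p²}·α·φ_p⌋`. -/
noncomputable def mfun (φ : ℕ → ℝ) (Kp : ℕ → ℕ) (α : ℝ) (p : ℕ) : ℕ :=
  ⌊(2 : ℝ) ^ ((Kp p) ^ 2) * α * φ p⌋₊

/-- `δ_{ip}`: the binary digit of `m_p` of weight `2^{K_p² − i}` (for `1 ≤ i ≤ K_p²`). -/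
noncomputable def dig (φ : ℕ → ℝ) (Kp : ℕ → ℕ) (α : ℝ) (i p : ℕ) : ℕ :=
  mfun φ Kp α p / 2 ^ ((Kp p) ^ 2 - i) % 2

/-- `Δ_{ip} := Σ_{j=(i−1)²+1}^{i²} δ_{jp}·2^{i²−j}` for `1 ≤ i ≤ K_p`, and `0` for `i > K_p`. -/
noncomputable def Blk (φ : ℕ → ℝ) (Kp : ℕ → ℕ) (α : ℝ) (i p : ℕ) : ℕ :=
  if i ≤ Kp p then ∑ j ∈ Finset.Icc ((i - 1) ^ 2 + 1) (i ^ 2), dig φ Kp α j p * 2 ^ (i ^ 2 - j)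
  else 0

/-- `t_p := 2^{K_p² + 3K_p + 2}`. -/
def tfun (Kp : ℕ → ℕ) (p : ℕ) : ℕ := 2 ^ ((Kp p) ^ 2 + 3 * Kp p + 2)

/-- `a_p := Σ_{i=1}^{K_p} Δ_{ip}·2^{(i−1)²+3i} + t_p`. -/
noncomputable def afun (φ : ℕ → ℝ) (Kp : ℕ → ℕ) (α : ℝ) (p : ℕ) : ℕ :=
  (∑ i ∈ Finset.Icc 1 (Kp p), Blk φ Kp α i p * 2 ^ ((i - 1) ^ 2 + 3 * i)) + tfun Kp p

/-- A quadruple `(p,q,r,s)` is bad (w.r.t. `α`) if `a_p + a_q = a_r + a_s` and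
`a_p > a_r ≥ a_s > a_q`. -/
noncomputable def IsBad (φ : ℕ → ℝ) (Kp : ℕ → ℕ) (α : ℝ) (p q r s : ℕ) : Prop :=
  afun φ Kp α p + afun φ Kp α q = afun φ Kp α r + afun φ Kp α s ∧
  afun φ Kp α r < afun φ Kp α p ∧ afun φ Kp α s ≤ afun φ Kp α r ∧ afun φ Kp α q < afun φ Kp α s

/-- The hypothesis defining `φ_p = (1/π)·arctan(v_p/u_p)` for primes `p ≡ 1 (mod 4)`,
where `p = u_p² + v_p²` with `u_p > v_p > 0`. -/
def PhiHyp (u v : ℕ → ℕ) (φ : ℕ → ℝ) : Prop :=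
  ∀ p : ℕ, p.Prime → p % 4 = 1 →
    0 < v p ∧ v p < u p ∧ p = (u p) ^ 2 + (v p) ^ 2 ∧
    φ p = (1 / Real.pi) * Real.arctan ((v p : ℝ) / (u p : ℝ))

/-- The hypothesis defining `K_p`: the unique integer `K > 2` with
`2^{(K−2)²} < p^β < 2^{(K−1)²}`, for primes `p ≡ 1 (mod 4)`. -/
def KpHyp (β : ℝ) (Kp : ℕ → ℕ) : Prop :=
  ∀ p : ℕ, p.Prime → p % 4 = 1 →
    2 < Kp p ∧ (2 : ℝ) ^ ((Kp p - 2) ^ 2) < (p : ℝ) ^ β ∧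
      (p : ℝ) ^ β < (2 : ℝ) ^ ((Kp p - 1) ^ 2)

/-!
The digits of `m_p` are cut into blocks `Δ_{ip}` of `2i - 1` bits, and `a_p` places them at
offsets `(i-1)² + 3i`, which grow by `2i + 2`; so the sum of two blocks never carries into the
next one and `a_p + a_q = a_r + a_s` forces `Δ_{ip} + Δ_{iq} = Δ_{ir} + Δ_{is}` for every `i`.
Reassembling the blocks, the dyadic truncations `m_p / 2^{K²}` of `α φ_p` satisfy the same
relation, whence `|φ_p + φ_q - φ_r - φ_s| < 2 · 2^{-L²}`.

For the second claim let `w = π_p π_q π̄_r π̄_s` with `π_p = u_p + v_p i`. Its argument is `π T`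
with `T = φ_p + φ_q - φ_r - φ_s`, so `Im w = √(pqrs) · sin (π T)`. If `Im w = 0` then `T = 0` and
`pqrs = (Re w)²`, which for primes with `p ≠ r, s` and `q ≠ r` forces `p = q`, `r = s` and then
`φ_p = φ_r`; but `φ_p` determines `p`. Hence `Im w` is a nonzero integer, `1 ≤ π |T| √(pqrs)`,
and comparing with `p^β < 2^{(K-1)²}` gives the claim already with `L₀ = 0`.
-/

open Finset

namespace Nat

lemma sum_Icc_div_two_pow_mod_two_mul {a b : ℕ} (hab : a ≤ b) (x : ℕ) :
    ∑ j ∈ Icc (a + 1) b, x / 2 ^ (b - j) % 2 * 2 ^ (b - j) = x % 2 ^ (b - a) := by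
  have bits : ∀ n, ∑ e ∈ range n, x / 2 ^ e % 2 * 2 ^ e = x % 2 ^ n := by
    intro n
    induction n with
    | zero => simp [Nat.mod_one]
    | succ n ih => rw [sum_range_succ, ih, Nat.mod_pow_succ]; ring
  rw [← bits]
  apply sum_nbij' (b - ·) (b - ·) <;> intro j hj <;> simp only [mem_Icc, mem_range] at hj ⊢ <;>
    omega

lemma div_two_pow_sub_eq_sum_Icc {s : ℕ → ℕ} (hs : Monotone s) (hs0 : s 0 = 0) {x N : ℕ}
    (hx : x < 2 ^ N) : ∀ k, s k ≤ N →
      x / 2 ^ (N - s k) =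
        ∑ i ∈ Icc 1 k, x / 2 ^ (N - s i) % 2 ^ (s i - s (i - 1)) * 2 ^ (s k - s i)
  | 0, _ => by simp [hs0, Nat.div_eq_of_lt hx]
  | k + 1, hk => by
    have hkk : s k ≤ s (k + 1) := hs k.le_succ
    have hhigh : x / 2 ^ (N - s (k + 1)) / 2 ^ (s (k + 1) - s k) = x / 2 ^ (N - s k) := by
      rw [Nat.div_div_eq_div_mul, ← pow_add]; congr 2; omega
    rw [sum_Icc_succ_top (by omega), Nat.add_sub_cancel, Nat.sub_self, pow_zero, mul_one]
    conv_lhs => rw [← Nat.div_add_mod (x / 2 ^ (N - s (k + 1))) (2 ^ (s (k + 1) - s k)), hhigh,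
      div_two_pow_sub_eq_sum_Icc hs hs0 hx k (by omega), mul_sum]
    congr 1
    refine sum_congr rfl fun i hi => ?_
    have hik : s i ≤ s k := hs (mem_Icc.mp hi).2
    rw [mul_comm, mul_assoc, ← pow_add]; congr 2; omega

lemma sum_Icc_mul_lt {w c : ℕ → ℕ} (hw : 0 < w 1)
    (h : ∀ i, 1 ≤ i → (c i + 1) * w i ≤ w (i + 1)) :
    ∀ n, ∑ i ∈ Icc 1 n, c i * w i < w (n + 1)
  | 0 => by simpa using hw
  | n + 1 => by
    rw [sum_Icc_succ_top (by omega)]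
    have := sum_Icc_mul_lt hw h n
    have := h (n + 1) (by omega)
    nlinarith

lemma eq_of_sum_Icc_mul_eq {w c d : ℕ → ℕ} (hw : 0 < w 1)
    (hc : ∀ i, 1 ≤ i → (c i + 1) * w i ≤ w (i + 1))
    (hd : ∀ i, 1 ≤ i → (d i + 1) * w i ≤ w (i + 1)) :
    ∀ n, ∑ i ∈ Icc 1 n, c i * w i = ∑ i ∈ Icc 1 n, d i * w i → ∀ i ∈ Icc 1 n, c i = d i
  | 0, _ => by simp
  | n + 1, h => by
    rw [sum_Icc_succ_top (by omega), sum_Icc_succ_top (by omega)] at h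
    have hpos : 0 < w (n + 1) := lt_of_le_of_lt (Nat.zero_le _) (sum_Icc_mul_lt hw hc n)
    have hlow := congrArg (· % w (n + 1)) h
    have hhigh := congrArg (· / w (n + 1)) h
    simp only [Nat.add_mul_mod_self_right, Nat.add_mul_div_right _ _ hpos,
      Nat.mod_eq_of_lt (sum_Icc_mul_lt hw hc n), Nat.mod_eq_of_lt (sum_Icc_mul_lt hw hd n),
      Nat.div_eq_of_lt (sum_Icc_mul_lt hw hc n), Nat.div_eq_of_lt (sum_Icc_mul_lt hw hd n),
      zero_add] at hlow hhigh
    intro i hi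
    rcases (mem_Icc.mp hi).2.lt_or_eq with hin | rfl
    · exact eq_of_sum_Icc_mul_eq hw hc hd n hlow i (mem_Icc.mpr ⟨(mem_Icc.mp hi).1, by omega⟩)
    · exact hhigh

end Nat

section Digits

variable (φ : ℕ → ℝ) (Kp : ℕ → ℕ) (α : ℝ)

lemma Blk_eq_div_mod {i p : ℕ} (hi : i ≤ Kp p) :
    Blk φ Kp α i p = mfun φ Kp α p / 2 ^ (Kp p ^ 2 - i ^ 2) % 2 ^ (i ^ 2 - (i - 1) ^ 2) := by
  have hsq : (i - 1) ^ 2 ≤ i ^ 2 := Nat.pow_le_pow_left (Nat.sub_le i 1) 2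
  have hiK : i ^ 2 ≤ Kp p ^ 2 := Nat.pow_le_pow_left hi 2
  rw [Blk, if_pos hi, ← Nat.sum_Icc_div_two_pow_mod_two_mul hsq]
  refine sum_congr rfl fun j hj => ?_
  have hj : j ≤ i ^ 2 := (mem_Icc.mp hj).2
  rw [dig, Nat.div_div_eq_div_mul, ← pow_add]
  congr 4
  omega

lemma Blk_lt {i : ℕ} (hi : 1 ≤ i) (p : ℕ) : Blk φ Kp α i p < 2 ^ (2 * i - 1) := by
  by_cases h : i ≤ Kp p
  · obtain ⟨j, rfl⟩ := Nat.exists_eq_add_of_le' hi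
    have : (j + 1) ^ 2 - (j + 1 - 1) ^ 2 = 2 * (j + 1) - 1 := by
      rw [Nat.add_sub_cancel, add_sq]; omega
    rw [Blk_eq_div_mod φ Kp α h, this]
    exact Nat.mod_lt _ (by positivity)
  · rw [Blk, if_neg h]
    positivity

lemma mfun_eq_sum_Blk {p : ℕ} (hm : mfun φ Kp α p < 2 ^ (Kp p ^ 2)) :
    mfun φ Kp α p = ∑ i ∈ Icc 1 (Kp p), Blk φ Kp α i p * 2 ^ (Kp p ^ 2 - i ^ 2) := by
  have hsq : Monotone (· ^ 2 : ℕ → ℕ) := fun _ _ h => Nat.pow_le_pow_left h 2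
  have := Nat.div_two_pow_sub_eq_sum_Icc hsq rfl hm (Kp p) le_rfl
  rw [Nat.sub_self, pow_zero, Nat.div_one] at this
  rw [this]
  refine sum_congr rfl fun i hi => ?_
  rw [Blk_eq_div_mod φ Kp α (mem_Icc.mp hi).2]

lemma sum_Icc_Blk_smul_of_le {M : Type*} [AddCommMonoid M] (f : ℕ → M) {p K : ℕ}
    (hK : Kp p ≤ K) :
    ∑ i ∈ Icc 1 (Kp p), Blk φ Kp α i p • f i = ∑ i ∈ Icc 1 K, Blk φ Kp α i p • f i := by
  refine sum_subset (Icc_subset_Icc_right hK) fun i _ hi => ?_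
  rw [Blk, if_neg (by simp_all), zero_smul]

lemma Blk_add_eq_of_afun_add_eq {p q r s K L : ℕ} (hp : Kp p = K) (hr : Kp r = K)
    (hq : Kp q = L) (hs : Kp s = L) (hLK : L ≤ K)
    (h : afun φ Kp α p + afun φ Kp α q = afun φ Kp α r + afun φ Kp α s) :
    ∀ i ∈ Icc 1 K, Blk φ Kp α i p + Blk φ Kp α i q = Blk φ Kp α i r + Blk φ Kp α i s := by
  have hafun : ∀ x, Kp x ≤ K → afun φ Kp α x =
      ∑ i ∈ Icc 1 K, Blk φ Kp α i x * 2 ^ ((i - 1) ^ 2 + 3 * i) + tfun Kp x := fun x hx => by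
    simpa only [afun, smul_eq_mul] using congrArg (· + tfun Kp x)
      (sum_Icc_Blk_smul_of_le φ Kp α (fun i => 2 ^ ((i - 1) ^ 2 + 3 * i)) hx)
  rw [hafun p hp.le, hafun q (hq ▸ hLK), hafun r hr.le, hafun s (hs ▸ hLK),
    tfun, tfun, tfun, tfun, hp, hq, hr, hs] at h
  have hweight : ∀ x y, ∀ i, 1 ≤ i → ((Blk φ Kp α i x + Blk φ Kp α i y) + 1) *
      2 ^ ((i - 1) ^ 2 + 3 * i) ≤ 2 ^ ((i + 1 - 1) ^ 2 + 3 * (i + 1)) := by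
    intro x y i hi
    obtain ⟨j, rfl⟩ := Nat.exists_eq_add_of_le' hi
    have hx := Blk_lt φ Kp α hi x
    have hy := Blk_lt φ Kp α hi y
    calc _ ≤ 2 ^ (2 * (j + 1)) * 2 ^ ((j + 1 - 1) ^ 2 + 3 * (j + 1)) := by
          gcongr
          rw [show 2 * (j + 1) = 2 * (j + 1) - 1 + 1 by omega, pow_succ]
          omega
      _ ≤ _ := by
          rw [← pow_add]
          exact Nat.pow_le_pow_right two_pos (by simp only [Nat.add_sub_cancel]; nlinarith)
  refine Nat.eq_of_sum_Icc_mul_eq (by positivity) (hweight p q) (hweight r s) K ?_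
  simp only [add_mul, sum_add_distrib]
  omega

end Digits

section Dyadic

variable (φ : ℕ → ℝ) (Kp : ℕ → ℕ) {α : ℝ}

lemma mfun_lt_two_pow (hα : α ∈ Set.Ico 1 2) {p : ℕ} (hφ : φ p ∈ Set.Ico 0 (1 / 4)) :
    mfun φ Kp α p < 2 ^ (Kp p ^ 2) := by
  obtain ⟨hα1, hα2⟩ := hα
  obtain ⟨hφ0, hφ4⟩ := hφ
  rw [mfun, Nat.floor_lt (by positivity), mul_assoc]
  push_cast
  exact mul_lt_of_lt_one_right (by positivity) (by nlinarith)

lemma mfun_div_two_pow_le_and_lt (hα : 0 ≤ α) {p : ℕ} (hφ : 0 ≤ φ p) :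
    (mfun φ Kp α p : ℝ) / 2 ^ (Kp p ^ 2) ≤ α * φ p ∧
      α * φ p < ((mfun φ Kp α p : ℝ) + 1) / 2 ^ (Kp p ^ 2) := by
  have h2 : (0 : ℝ) < 2 ^ (Kp p ^ 2) := by positivity
  rw [div_le_iff₀' h2, lt_div_iff₀' h2, mfun, mul_assoc]
  exact ⟨Nat.floor_le (by positivity), Nat.lt_floor_add_one _⟩

lemma mfun_div_two_pow_eq_sum {p K : ℕ} (hm : mfun φ Kp α p < 2 ^ (Kp p ^ 2))
    (hK : Kp p ≤ K) :
    (mfun φ Kp α p : ℝ) / 2 ^ (Kp p ^ 2) =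
      ∑ i ∈ Icc 1 K, (Blk φ Kp α i p : ℝ) * (2 ^ (i ^ 2))⁻¹ := by
  simp only [← nsmul_eq_mul, ← sum_Icc_Blk_smul_of_le φ Kp α _ hK]
  rw [mfun_eq_sum_Blk φ Kp α hm]
  push_cast
  rw [sum_div]
  refine sum_congr rfl fun i hi => ?_
  rw [nsmul_eq_mul, pow_sub₀ _ two_ne_zero (Nat.pow_le_pow_left (mem_Icc.mp hi).2 2)]
  field_simp

lemma mfun_div_add_eq_of_afun_add_eq (hα : α ∈ Set.Ico 1 2) {p q r s K L : ℕ}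
    (hφp : φ p ∈ Set.Ico 0 (1 / 4)) (hφq : φ q ∈ Set.Ico 0 (1 / 4))
    (hφr : φ r ∈ Set.Ico 0 (1 / 4)) (hφs : φ s ∈ Set.Ico 0 (1 / 4))
    (hp : Kp p = K) (hr : Kp r = K) (hq : Kp q = L) (hs : Kp s = L) (hLK : L ≤ K)
    (h : afun φ Kp α p + afun φ Kp α q = afun φ Kp α r + afun φ Kp α s) :
    (mfun φ Kp α p : ℝ) / 2 ^ (K ^ 2) + (mfun φ Kp α q : ℝ) / 2 ^ (L ^ 2) =
      (mfun φ Kp α r : ℝ) / 2 ^ (K ^ 2) + (mfun φ Kp α s : ℝ) / 2 ^ (L ^ 2) := by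
  have hsum : ∀ x M, Kp x = M → M ≤ K → φ x ∈ Set.Ico 0 (1 / 4) →
      (mfun φ Kp α x : ℝ) / 2 ^ (M ^ 2) =
        ∑ i ∈ Icc 1 K, (Blk φ Kp α i x : ℝ) * (2 ^ (i ^ 2))⁻¹ := by
    rintro x M rfl hx hφx
    exact mfun_div_two_pow_eq_sum φ Kp (mfun_lt_two_pow φ Kp hα hφx) hx
  rw [hsum p K hp le_rfl hφp, hsum q L hq hLK hφq, hsum r K hr le_rfl hφr, hsum s L hs hLK hφs,
    ← sum_add_distrib, ← sum_add_distrib]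
  refine sum_congr rfl fun i hi => ?_
  rw [← add_mul, ← add_mul]
  exact_mod_cast congrArg (fun n : ℕ => (n : ℝ) * ((2 : ℝ) ^ (i ^ 2))⁻¹)
    (Blk_add_eq_of_afun_add_eq φ Kp α hp hr hq hs hLK h i hi)

lemma abs_sub_lt_of_afun_add_eq (hα : α ∈ Set.Ico 1 2) {p q r s K L : ℕ}
    (hφp : φ p ∈ Set.Ico 0 (1 / 4)) (hφq : φ q ∈ Set.Ico 0 (1 / 4))
    (hφr : φ r ∈ Set.Ico 0 (1 / 4)) (hφs : φ s ∈ Set.Ico 0 (1 / 4))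
    (hp : Kp p = K) (hr : Kp r = K) (hq : Kp q = L) (hs : Kp s = L) (hLK : L ≤ K)
    (h : afun φ Kp α p + afun φ Kp α q = afun φ Kp α r + afun φ Kp α s) :
    |φ p + φ q - φ r - φ s| < 2 / 2 ^ (L ^ 2) := by
  have hdyadic := mfun_div_add_eq_of_afun_add_eq φ Kp hα hφp hφq hφr hφs hp hr hq hs hLK h
  have hα0 : 0 ≤ α := zero_le_one.trans hα.1
  have hbounds : ∀ x M, Kp x = M → φ x ∈ Set.Ico 0 (1 / 4) →
      (mfun φ Kp α x : ℝ) / 2 ^ (M ^ 2) ≤ α * φ x ∧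
        α * φ x < (mfun φ Kp α x : ℝ) / 2 ^ (M ^ 2) + 1 / 2 ^ (M ^ 2) := by
    rintro x M rfl hφx
    rw [← add_div]
    exact mfun_div_two_pow_le_and_lt φ Kp hα0 hφx.1
  obtain ⟨hp₁, hp₂⟩ := hbounds p K hp hφp
  obtain ⟨hq₁, hq₂⟩ := hbounds q L hq hφq
  obtain ⟨hr₁, hr₂⟩ := hbounds r K hr hφr
  obtain ⟨hs₁, hs₂⟩ := hbounds s L hs hφs
  have hKL : 1 / (2 : ℝ) ^ (K ^ 2) ≤ 1 / 2 ^ (L ^ 2) :=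
    one_div_le_one_div_of_le (by positivity)
      (pow_le_pow_right₀ one_le_two (Nat.pow_le_pow_left hLK 2))
  have hαT : |α * (φ p + φ q - φ r - φ s)| < 2 / 2 ^ (L ^ 2) := by
    rw [abs_lt, ← one_add_one_eq_two, add_div]
    constructor <;> linarith
  calc |φ p + φ q - φ r - φ s| ≤ α * |φ p + φ q - φ r - φ s| :=
        le_mul_of_one_le_left (abs_nonneg _) hα.1
    _ = |α * (φ p + φ q - φ r - φ s)| := by rw [abs_mul, abs_of_nonneg hα0]
    _ < 2 / 2 ^ (L ^ 2) := hαT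

end Dyadic

open Complex ComplexConjugate

lemma Complex.im_mul_mul_conj_mul_conj (z₁ z₂ z₃ z₄ : ℂ) :
    (z₁ * z₂ * conj z₃ * conj z₄).im =
      ‖z₁‖ * ‖z₂‖ * ‖z₃‖ * ‖z₄‖ * Real.sin (arg z₁ + arg z₂ - arg z₃ - arg z₄) := by
  have hpolar : z₁ * z₂ * conj z₃ * conj z₄ = ((‖z₁‖ * ‖z₂‖ * ‖z₃‖ * ‖z₄‖ : ℝ) : ℂ) *
      exp ((arg z₁ + arg z₂ - arg z₃ - arg z₄ : ℝ) * I) := by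
    conv_lhs => rw [← norm_mul_exp_arg_mul_I z₁, ← norm_mul_exp_arg_mul_I z₂,
      ← norm_mul_exp_arg_mul_I z₃, ← norm_mul_exp_arg_mul_I z₄]
    simp only [map_mul, conj_ofReal, ← exp_conj, conj_I]
    push_cast
    rw [show ((arg z₁ + arg z₂ - arg z₃ - arg z₄ : ℂ)) * I =
      arg z₁ * I + arg z₂ * I + arg z₃ * -I + arg z₄ * -I by ring, exp_add, exp_add, exp_add]
    ring
  rw [hpolar, im_ofReal_mul, exp_ofReal_mul_I_im]

lemma GaussianInt.arg_mk (a b : ℕ) (ha : 0 < a) :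
    arg ((⟨a, b⟩ : GaussianInt) : ℂ) = Real.arctan (b / a) := by
  have hre : ((⟨a, b⟩ : GaussianInt) : ℂ).re = a := by simp [GaussianInt.toComplex_def]
  have him : ((⟨a, b⟩ : GaussianInt) : ℂ).im = b := by simp [GaussianInt.toComplex_def]
  have harg := abs_lt.mp (abs_arg_lt_pi_div_two_iff.mpr (Or.inl (hre ▸ Nat.cast_pos.mpr ha)))
  rw [← Real.arctan_tan harg.1 harg.2, tan_arg, hre, him]

lemma GaussianInt.norm_toComplex (x : GaussianInt) : ‖(x : ℂ)‖ = √(x.norm : ℝ) := by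
  rw [GaussianInt.intCast_real_norm, Complex.norm_def]

lemma Nat.Prime.dvd_of_mul_eq_sq {p m n : ℕ} (hp : p.Prime) (h : p * m = n ^ 2) : p ∣ m := by
  obtain ⟨t, rfl⟩ := hp.dvd_of_dvd_pow (Dvd.intro m h)
  exact ⟨t ^ 2, Nat.eq_of_mul_eq_mul_left hp.pos (by rw [h]; ring)⟩

lemma Nat.Prime.eq_and_eq_of_mul_eq_sq {p q r s n : ℕ} (hp : p.Prime) (hq : q.Prime)
    (hr : r.Prime) (hs : s.Prime) (hpr : p ≠ r) (hps : p ≠ s) (hqr : q ≠ r)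
    (h : p * q * r * s = n ^ 2) : p = q ∧ r = s := by
  have hp' : p ∣ q * r * s := hp.dvd_of_mul_eq_sq (by rw [← h]; ring)
  have hr' : r ∣ p * q * s := hr.dvd_of_mul_eq_sq (by rw [← h]; ring)
  simp only [hp.dvd_mul, hr.dvd_mul, Nat.prime_dvd_prime_iff_eq hp hq,
    Nat.prime_dvd_prime_iff_eq hp hr, Nat.prime_dvd_prime_iff_eq hp hs,
    Nat.prime_dvd_prime_iff_eq hr hp, Nat.prime_dvd_prime_iff_eq hr hq,
    Nat.prime_dvd_prime_iff_eq hr hs] at hp' hr'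
  tauto

open Real

namespace PhiHyp

variable {u v : ℕ → ℕ} {φ : ℕ → ℝ} {p : ℕ}

lemma pi_mul_eq_arg (h : PhiHyp u v φ) (hp : p.Prime) (hp4 : p % 4 = 1) :
    π * φ p = arg ((⟨u p, v p⟩ : GaussianInt) : ℂ) := by
  obtain ⟨hv, hvu, -, hφ⟩ := h p hp hp4
  rw [GaussianInt.arg_mk _ _ (hv.trans hvu), hφ]
  field_simp

lemma norm_mk (h : PhiHyp u v φ) (hp : p.Prime) (hp4 : p % 4 = 1) :
    (⟨u p, v p⟩ : GaussianInt).norm = p := by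
  obtain ⟨-, -, hpuv, -⟩ := h p hp hp4
  rw [Zsqrtd.norm_def]
  conv_rhs => rw [hpuv]
  push_cast
  ring

lemma mem_Ico (h : PhiHyp u v φ) (hp : p.Prime) (hp4 : p % 4 = 1) :
    φ p ∈ Set.Ico 0 (1 / 4) := by
  obtain ⟨hv, hvu, -, hφ⟩ := h p hp hp4
  have hu : (0 : ℝ) < u p := by exact_mod_cast hv.trans hvu
  have hvu' : (v p : ℝ) / u p < 1 := (div_lt_one hu).mpr (by exact_mod_cast hvu)
  rw [hφ, one_div_mul_eq_div, Set.mem_Ico, le_div_iff₀ pi_pos, div_lt_iff₀ pi_pos, zero_mul]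
  refine ⟨Real.arctan_nonneg.mpr (by positivity), ?_⟩
  calc Real.arctan (v p / u p) < Real.arctan 1 := Real.arctan_strictMono hvu'
    _ = 1 / 4 * π := by rw [Real.arctan_one]; ring

lemma eq_of_eq (h : PhiHyp u v φ) (hp : p.Prime) (hp4 : p % 4 = 1) {r : ℕ} (hr : r.Prime)
    (hr4 : r % 4 = 1) (hφ : φ p = φ r) : p = r := by
  obtain ⟨hvp, hvup, hpuv, hφp⟩ := h p hp hp4
  obtain ⟨hvr, hvur, hruv, hφr⟩ := h r hr hr4
  have hup : (0 : ℝ) < u p := by exact_mod_cast hvp.trans hvup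
  have hur : (0 : ℝ) < u r := by exact_mod_cast hvr.trans hvur
  rw [hφp, hφr, mul_right_inj' (by positivity), Real.arctan_injective.eq_iff,
    div_eq_div_iff hup.ne' hur.ne'] at hφ
  have hcross : (v p * u r : ℤ) = v r * u p := by exact_mod_cast hφ
  have hsq : v p ^ 2 * r = v r ^ 2 * p := by
    zify at hpuv hruv ⊢
    linear_combination (v p * u r + v r * u p : ℤ) * hcross + (v p ^ 2 : ℤ) * hruv -
      (v r ^ 2 : ℤ) * hpuv
  have hvp_lt : v p < p := by nlinarith
  rcases (Nat.Prime.dvd_mul hp).mp (Dvd.intro_left _ hsq.symm) with hdvd | hdvd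
  · exact absurd (hp.dvd_of_dvd_pow hdvd) (Nat.not_dvd_of_pos_of_lt hvp hvp_lt)
  · exact (Nat.prime_dvd_prime_iff_eq hp hr).mp hdvd

lemma one_le_pi_mul_abs_mul_sqrt (h : PhiHyp u v φ) (hp : p.Prime) (hp4 : p % 4 = 1)
    {q r s : ℕ} (hq : q.Prime) (hq4 : q % 4 = 1) (hr : r.Prime) (hr4 : r % 4 = 1)
    (hs : s.Prime) (hs4 : s % 4 = 1)
    (hpr : p ≠ r) (hps : p ≠ s) (hqr : q ≠ r) :
    1 ≤ π * |φ p + φ q - φ r - φ s| * (√p * √q * √r * √s) := by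
  set T := φ p + φ q - φ r - φ s
  set g : ℕ → GaussianInt := fun x => ⟨u x, v x⟩
  set w := g p * g q * star (g r) * star (g s)
  have hnorm : ∀ x, x.Prime → x % 4 = 1 → ‖(g x : ℂ)‖ = √x := fun x hx hx4 => by
    rw [GaussianInt.norm_toComplex, h.norm_mk hx hx4, Int.cast_natCast]
  have him : (w.im : ℝ) = (√p * √q * √r * √s) * Real.sin (π * T) := by
    rw [GaussianInt.intCast_im, GaussianInt.toComplex_mul, GaussianInt.toComplex_mul,
      GaussianInt.toComplex_mul, GaussianInt.toComplex_star, GaussianInt.toComplex_star,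
      im_mul_mul_conj_mul_conj, hnorm p hp hp4, hnorm q hq hq4, hnorm r hr hr4, hnorm s hs hs4,
      ← h.pi_mul_eq_arg hp hp4, ← h.pi_mul_eq_arg hq hq4, ← h.pi_mul_eq_arg hr hr4,
      ← h.pi_mul_eq_arg hs hs4]
    congr 2
    ring
  have hR : 0 < √p * √q * √r * √s := by
    have := hp.pos; have := hq.pos; have := hr.pos; have := hs.pos
    positivity
  have hT : |π * T| < π := by
    have := h.mem_Ico hp hp4; have := h.mem_Ico hq hq4
    have := h.mem_Ico hr hr4; have := h.mem_Ico hs hs4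
    rw [abs_mul, abs_of_pos pi_pos]
    refine mul_lt_of_lt_one_right pi_pos (abs_lt.mpr ⟨?_, ?_⟩) <;>
      simp only [Set.mem_Ico] at * <;> linarith
  rcases eq_or_ne w.im 0 with h0 | h0
  · exfalso
    have hT0 : T = 0 := by
      rw [h0, Int.cast_zero, zero_eq_mul, or_iff_right hR.ne',
        Real.sin_eq_zero_iff_of_lt_of_lt (abs_lt.mp hT).1 (abs_lt.mp hT).2] at him
      exact (mul_eq_zero.mp him).resolve_left pi_ne_zero
    have hsq : p * q * r * s = w.re.natAbs ^ 2 := by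
      have hw : w.norm = p * q * r * s := by
        simp only [w, Zsqrtd.norm_mul, Zsqrtd.norm_conj, h.norm_mk hp hp4, h.norm_mk hq hq4,
          h.norm_mk hr hr4, h.norm_mk hs hs4, g]
      rw [Zsqrtd.norm_def, h0] at hw
      zify
      rw [sq_abs, ← hw]
      ring
    obtain ⟨rfl, rfl⟩ := Nat.Prime.eq_and_eq_of_mul_eq_sq hp hq hr hs hpr hps hqr hsq
    exact hpr (h.eq_of_eq hp hp4 hr hr4 (by linarith))
  · calc (1 : ℝ) ≤ |(w.im : ℝ)| := by exact_mod_cast Int.one_le_abs h0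
      _ = (√p * √q * √r * √s) * |Real.sin (π * T)| := by rw [him, abs_mul, abs_of_pos hR]
      _ ≤ (√p * √q * √r * √s) * |π * T| :=
          mul_le_mul_of_nonneg_left Real.abs_sin_le_abs hR.le
      _ = π * |T| * (√p * √q * √r * √s) := by rw [abs_mul, abs_of_pos pi_pos]; ring

end PhiHyp

lemma mul_sub_three_lt_of_one_le {β T : ℝ} (hβ : 0 < β) {p q r s a b n : ℕ}
    (hp : 0 < p) (hq : 0 < q) (hr : 0 < r) (hs : 0 < s)
    (hpa : (p : ℝ) ^ β < 2 ^ a) (hqb : (q : ℝ) ^ β < 2 ^ b)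
    (hra : (r : ℝ) ^ β < 2 ^ a) (hsb : (s : ℝ) ^ β < 2 ^ b)
    (h1 : 1 ≤ π * |T| * (√p * √q * √r * √s)) (hT : |T| < 2 / 2 ^ n) :
    β * (n - 3) < a + b := by
  have hlog : ∀ x c : ℕ, 0 < x → (x : ℝ) ^ β < 2 ^ c → β * Real.log x < c * Real.log 2 := by
    intro x c hx hxc
    have := Real.log_lt_log (by positivity) hxc
    rwa [Real.log_rpow (by exact_mod_cast hx), Real.log_pow] at this
  have hR : 0 < √p * √q * √r * √s := by positivity
  have hlogR : Real.log (√p * √q * √r * √s) =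
      (Real.log p + Real.log q + Real.log r + Real.log s) / 2 := by
    rw [Real.log_mul (by positivity) (by positivity), Real.log_mul (by positivity) (by positivity),
      Real.log_mul (by positivity) (by positivity), Real.log_sqrt (by positivity),
      Real.log_sqrt (by positivity), Real.log_sqrt (by positivity), Real.log_sqrt (by positivity)]
    ring
  have h8 : (2 : ℝ) ^ n < 2 ^ 3 * (√p * √q * √r * √s) := by
    have h2n : (0 : ℝ) < 2 ^ n := by positivity
    rw [lt_div_iff₀ h2n] at hT
    calc (2 : ℝ) ^ n = 1 * 2 ^ n := (one_mul _).symm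
      _ ≤ π * |T| * (√p * √q * √r * √s) * 2 ^ n := mul_le_mul_of_nonneg_right h1 h2n.le
      _ = π * (√p * √q * √r * √s) * (|T| * 2 ^ n) := by ring
      _ < π * (√p * √q * √r * √s) * 2 := mul_lt_mul_of_pos_left hT (by positivity)
      _ < 2 ^ 3 * (√p * √q * √r * √s) := by nlinarith [pi_lt_four]
  have hlog8 := Real.log_lt_log (by positivity) h8
  rw [Real.log_mul (by positivity) hR.ne', Real.log_pow, Real.log_pow, hlogR] at hlog8
  have := mul_lt_mul_of_pos_left hlog8 hβ
  nlinarith [hlog p a hp hpa, hlog q b hq hqb, hlog r a hr hra, hlog s b hs hsb,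
    Real.log_pos one_lt_two]

theorem stmt8 (β : ℝ) (hβ : 2 < β) :
    ∃ L₀ : ℕ, ∀ (α : ℝ), α ∈ Set.Ico (1 : ℝ) 2 →
      ∀ (u v Kp : ℕ → ℕ) (φ : ℕ → ℝ), PhiHyp u v φ → KpHyp β Kp →
      ∀ p q r s K L : ℕ,
        p.Prime → p % 4 = 1 → q.Prime → q % 4 = 1 →
        r.Prime → r % 4 = 1 → s.Prime → s % 4 = 1 →
        L ≤ K → Kp p = K → Kp r = K → Kp q = L → Kp s = L →
        IsBad φ Kp α p q r s →
        |φ p + φ q - φ r - φ s| < 4 * (2 : ℝ) ^ (-((L : ℝ) ^ 2)) ∧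
        (L₀ ≤ L → β * ((L : ℝ) - 1) ^ 2 < ((K : ℝ) - 1) ^ 2 + ((L : ℝ) - 1) ^ 2) := by
  refine ⟨0, fun α hα u v Kp φ hφ hK p q r s K L hp hp4 hq hq4 hr hr4 hs hs4 hLK hpK hrK hqL hsL
    ⟨heq, hrp, hsr, hqs⟩ => ?_⟩
  have hT := abs_sub_lt_of_afun_add_eq φ Kp hα (hφ.mem_Ico hp hp4) (hφ.mem_Ico hq hq4)
    (hφ.mem_Ico hr hr4) (hφ.mem_Ico hs hs4) hpK hrK hqL hsL hLK heq
  refine ⟨?_, fun _ => ?_⟩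
  · have h2L : (2 : ℝ) ^ (-((L : ℝ) ^ 2)) = 1 / 2 ^ (L ^ 2) := by
      rw [Real.rpow_neg zero_le_two, ← one_div, ← Nat.cast_pow, Real.rpow_natCast]
    rw [h2L]
    have : (0 : ℝ) < 1 / 2 ^ (L ^ 2) := by positivity
    linarith [div_eq_mul_one_div (2 : ℝ) (2 ^ (L ^ 2))]
  · have h1 := hφ.one_le_pi_mul_abs_mul_sqrt hp hp4 hq hq4 hr hr4 hs hs4
      (ne_of_apply_ne (afun φ Kp α) hrp.ne') (ne_of_apply_ne (afun φ Kp α) (hsr.trans_lt hrp).ne')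
      (ne_of_apply_ne (afun φ Kp α) (hqs.trans_le hsr).ne)
    have hL3 : 3 ≤ L := hqL ▸ (hK q hq hq4).1
    have := mul_sub_three_lt_of_one_le (by linarith) hp.pos hq.pos hr.pos hs.pos
      (hpK ▸ (hK p hp hp4).2.2) (hqL ▸ (hK q hq hq4).2.2) (hrK ▸ (hK r hr hr4).2.2)
      (hsL ▸ (hK s hs hs4).2.2) h1 hT
    push_cast [Nat.cast_sub (by omega : 1 ≤ K), Nat.cast_sub (by omega : 1 ≤ L)] at this
    have hL3' : (3 : ℝ) ≤ L := by exact_mod_cast hL3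
    nlinarith
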